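/- Symmetry of the scalar products in the spin-1/2-per-site case (Appendix A, base cases): for s a positive half-integer and σ₁ ∈ {s, −s}, the function G₁(σ₁)(u,v) = e^{−2λsσ₁} ∏_{j=1}^{2s} ( e^{(σ₁/(2s))(v−u)} + e^{(σ₁/(2s))(u−v) + (2j−2s−1)λ} ) is symmetric under the exchange u ↔ v. -/
import Mathlib


open Finset

/-- `G₁(σ₁)(u,v) = e^{−2λsσ₁} ∏_{j=1}^{2s} ( e^{(σ₁/(2s))(v−u)} + e^{(σ₁/(2s))(u−v) + (2j−2s−1)λ} )`,
with `s2 = 2s`. -/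
noncomputable def Gone (s2 : ℕ) (lam σ1 u v : ℂ) : ℂ :=
  Complex.exp (-lam * (s2 : ℂ) * σ1) *
    ∏ j ∈ range s2,
      (Complex.exp ((σ1 / (s2 : ℂ)) * (v - u))
        + Complex.exp ((σ1 / (s2 : ℂ)) * (u - v) + (2 * ((j : ℂ) + 1) - (s2 : ℂ) - 1) * lam))

lemma exp_factor_aux (x y w : ℂ) :
    Complex.exp x + Complex.exp (y + w)
      = Complex.exp w * (Complex.exp y + Complex.exp (x + -w)) := by
  rw [mul_add, ← Complex.exp_add, ← Complex.exp_add, add_comm (Complex.exp (w + y))]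
  congr 1 <;> ring

/-- For `σ₁ ∈ {s, −s}`, the function `G₁(σ₁)(u,v)` is symmetric under `u ↔ v`. -/
theorem Gone_symmetric (s2 : ℕ) (hs2 : 1 ≤ s2) (lam : ℂ)
    (ε : ℂ) (hε : ε = 1 ∨ ε = -1) (σ1 : ℂ) (hσ1 : σ1 = ε * (s2 : ℂ) / 2)
    (u v : ℂ) :
    Gone s2 lam σ1 u v = Gone s2 lam σ1 v u := by
  unfold Gone
  congr 1
  set a : ℂ := σ1 / (s2 : ℂ) with ha
  set c : ℕ → ℂ := fun j => (2 * ((j : ℂ) + 1) - (s2 : ℂ) - 1) with hc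
  have hcrefl : ∀ j ∈ range s2, c (s2 - 1 - j) = - c j := by
    intro j hj
    have hj' : j < s2 := mem_range.mp hj
    have hcast : ((s2 - 1 - j : ℕ) : ℂ) = (s2 : ℂ) - 1 - (j : ℂ) := by
      have : s2 - 1 - j = s2 - (1 + j) := by omega
      rw [this, Nat.cast_sub (by omega : 1 + j ≤ s2)]
      push_cast; ring
    simp only [hc, hcast]; ring
  have hsum : ∑ j ∈ range s2, c j = 0 := by
    have h1 : ∑ j ∈ range s2, c (s2 - 1 - j) = ∑ j ∈ range s2, c j :=
      Finset.sum_range_reflect c s2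
    rw [Finset.sum_congr rfl hcrefl, Finset.sum_neg_distrib] at h1
    linear_combination (-1/2 : ℂ) * h1
  calc ∏ j ∈ range s2, (Complex.exp (a * (v - u)) + Complex.exp (a * (u - v) + c j * lam))
      = ∏ j ∈ range s2, (Complex.exp (c j * lam) *
          (Complex.exp (a * (u - v)) + Complex.exp (a * (v - u) + c (s2 - 1 - j) * lam))) := by
        refine Finset.prod_congr rfl fun j hj => ?_
        rw [hcrefl j hj, neg_mul, exp_factor_aux]
    _ = ∏ j ∈ range s2, (Complex.exp (a * (u - v)) + Complex.exp (a * (v - u) + c j * lam)) := by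
        rw [Finset.prod_mul_distrib, ← Complex.exp_sum, ← Finset.sum_mul, hsum, zero_mul,
          Complex.exp_zero, one_mul]
        exact Finset.prod_range_reflect
          (fun j => Complex.exp (a * (u - v)) + Complex.exp (a * (v - u) + c j * lam)) s2
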